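/- arXiv:1711.01862 — 2 statements merged into one kernel-verified Lean document; each statement's English description precedes it below -/
import Mathlib

section
/- Let Λ be a banded non-negative Toeplitz matrix with bandwidth Ω ∈ ℕ (entries Λ_{(i,j)} = λ_{j-i} ≥ 0 vanishing for |i-j| > Ω, with diagonal entry λ_0 > 0), and let p ∈ (0,∞), q ∈ (0,∞]. Then there exists a constant C > 0 such that for every non-increasing sequence {c_k}_{k∈ℕ} ∈ ℓ_q^p of non-negative numbers, if π_Λ : ℕ → ℕ is any bijection for which the weighted sequence {c^Λ_{π_Λ(k)}}_{k∈ℕ} is non-increasing, then ‖{c_{π_Λ(k)}}_{k=m+1}^∞‖_{ℓ_q^p} ≤ C ‖{c_k}_{k=m+1-Ω}^∞‖_{ℓ_q^p} for all m ≥ Ω. -/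
open scoped ENNReal NNReal
open Finset

noncomputable section

/-- Decreasing rearrangement (0-indexed) of an `ℝ≥0∞`-valued sequence:
`dRearr a i = inf { t : #{k : a k > t} ≤ i }`. -/
def dRearr (a : ℕ → ℝ≥0∞) (i : ℕ) : ℝ≥0∞ :=
  sInf {t : ℝ≥0∞ | ({k : ℕ | t < a k}).encard ≤ (i : ℕ∞)}

/-- Lorentz sequence (quasi-)norm `ℓ_q^τ` (`1`-indexed weights `m^{1/τ}`,
`m = i + 1`). -/
def lorentzNorm (τ : ℝ) (q : ℝ≥0∞) (a : ℕ → ℝ≥0∞) : ℝ≥0∞ :=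
  if q = ∞ then ⨆ i : ℕ, ((i : ℝ≥0∞) + 1) ^ (1 / τ) * dRearr a i
  else (∑' i : ℕ, (((i : ℝ≥0∞) + 1) ^ (1 / τ) * dRearr a i) ^ q.toReal /
        ((i : ℝ≥0∞) + 1)) ^ (1 / q.toReal)

/-- Lorentz norm of a sequence in a normed space (or `ℝ`, `ℂ`). -/
def lorentzNorm' {E : Type*} [NNNorm E] (τ : ℝ) (q : ℝ≥0∞) (c : ℕ → E) : ℝ≥0∞ :=
  lorentzNorm τ q fun k => (‖c k‖₊ : ℝ≥0∞)

/-- The classical `ℓ^τ` norm. -/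
def ellNorm (τ : ℝ) (c : ℕ → ℂ) : ℝ≥0∞ :=
  (∑' k : ℕ, (‖c k‖₊ : ℝ≥0∞) ^ τ) ^ (1 / τ)

/-- A banded non-negative Toeplitz weight with bandwidth `Ω`: entries
`λ_l ≥ 0`, vanishing for `|l| > Ω`, with positive diagonal `λ_0 > 0`. -/
def IsBandedWeight (Ω : ℕ) (lam : ℤ → ℝ) : Prop :=
  (∀ l, 0 ≤ lam l) ∧ 0 < lam 0 ∧ ∀ l : ℤ, (Ω : ℤ) < |l| → lam l = 0

/-- The weighted sequence `c^Λ_k = ∑_{j=k-Ω}^{k+Ω} λ_{j-k} |c_j|`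
(0-indexed; terms with index `j < 0` are treated as `0`). -/
def wSeq (Ω : ℕ) (lam : ℤ → ℝ) (c : ℕ → ℝ) (k : ℕ) : ℝ :=
  ∑ j ∈ Finset.Icc ((k : ℤ) - (Ω : ℤ)) ((k : ℤ) + (Ω : ℤ)),
    lam (j - (k : ℤ)) * (if 0 ≤ j then |c j.toNat| else 0)

variable {X : Type*} [NormedAddCommGroup X] [NormedSpace ℂ X]

/-- A complete dictionary: unit norm elements with dense span. -/
def IsDictionary (g : ℕ → X) : Prop :=
  (∀ k, ‖g k‖ = 1) ∧ Dense (Submodule.span ℂ (Set.range g) : Set X)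

/-- `D = {g_k}` is `ℓ_q^τ`-hilbertian: the reconstruction operator
`R : {c_k} ↦ ∑ c_k g_k` is bounded from `ℓ_q^τ` to `X` (stated on the dense
subspace of finitely supported sequences). -/
def IsHilbertian (g : ℕ → X) (τ : ℝ) (q : ℝ≥0∞) : Prop :=
  ∃ C : ℝ≥0∞, C ≠ ∞ ∧ ∀ c : ℕ → ℂ, (Function.support c).Finite →
    (‖∑ᶠ k, c k • g k‖₊ : ℝ≥0∞) ≤ C * lorentzNorm' τ q c

/-- `{g_k}` with dual system `{g̃_k}` forms an atomic decomposition for `X`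
with respect to `ℓ_q^τ`. -/
def IsAtomicDec (g : ℕ → X) (gd : ℕ → X →L[ℂ] ℂ) (τ : ℝ) (q : ℝ≥0∞) : Prop :=
  (∃ C' C'' : ℝ≥0∞, 0 < C' ∧ C' ≤ C'' ∧ C'' ≠ ∞ ∧ ∀ f : X,
      C' * lorentzNorm' τ q (fun k => gd k f) ≤ (‖f‖₊ : ℝ≥0∞) ∧
      (‖f‖₊ : ℝ≥0∞) ≤ C'' * lorentzNorm' τ q (fun k => gd k f)) ∧
  (∃ CR : ℝ≥0∞, CR ≠ ∞ ∧ ∀ c : ℕ → ℂ, lorentzNorm' τ q c ≠ ∞ →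
      ∃ h : X, HasSum (fun k => c k • g k) h ∧
        (‖h‖₊ : ℝ≥0∞) ≤ CR * lorentzNorm' τ q c) ∧
  (∀ f : X, HasSum (fun k => gd k f • g k) f)

/-- `K_q^τ(D,X,M)`: the `X`-closure of finite combinations `∑_{k∈Δ} c_k g_k`
with `‖{c_k}‖_{ℓ_q^τ} ≤ M`. -/
def KBall (g : ℕ → X) (τ : ℝ) (q : ℝ≥0∞) (M : ℝ≥0∞) : Set X :=
  closure {f : X | ∃ c : ℕ → ℂ, (Function.support c).Finite ∧
    lorentzNorm' τ q c ≤ M ∧ HasSum (fun k => c k • g k) f}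

/-- `K_q^τ(D,X) = ∪_{M>0} K_q^τ(D,X,M)`. -/
def Kset (g : ℕ → X) (τ : ℝ) (q : ℝ≥0∞) : Set X :=
  ⋃ M ∈ {M : ℝ≥0∞ | 0 < M ∧ M ≠ ∞}, KBall g τ q M

/-- `|f|_{K_q^τ(D,X)} = inf { M > 0 : f ∈ K_q^τ(D,X,M) }`. -/
def Ksemi (g : ℕ → X) (τ : ℝ) (q : ℝ≥0∞) (f : X) : ℝ≥0∞ :=
  sInf {M : ℝ≥0∞ | 0 < M ∧ f ∈ KBall g τ q M}

/-- The error of best `m`-term approximation `σ_m(f,D)_X`. -/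
def sigmaE (g : ℕ → X) (m : ℕ) (f : X) : ℝ≥0∞ :=
  ⨅ (s : Finset ℕ) (_ : s.card ≤ m) (c : ℕ → ℂ),
    (‖f - ∑ k ∈ s, c k • g k‖₊ : ℝ≥0∞)

/-- The approximation space norm
`‖f‖_{A_q^α} = ‖{σ_m(f,D)_X}_{m≥1}‖_{ℓ_q^{1/α}} + ‖f‖_X`. -/
def ANorm (g : ℕ → X) (α : ℝ) (q : ℝ≥0∞) (f : X) : ℝ≥0∞ :=
  lorentzNorm (1 / α) q (fun i => sigmaE g (i + 1) f) + ‖f‖₊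

/-- `(∑_{m=1}^∞ [m^α e_m]^q / m)^{1/q}` (`sup_{m ≥ 1} m^α e_m` for `q = ∞`). -/
def errPow (α : ℝ) (q : ℝ≥0∞) (e : ℕ → ℝ≥0∞) : ℝ≥0∞ :=
  if q = ∞ then ⨆ i : ℕ, ((i : ℝ≥0∞) + 1) ^ α * e (i + 1)
  else (∑' i : ℕ, (((i : ℝ≥0∞) + 1) ^ α * e (i + 1)) ^ q.toReal /
        ((i : ℝ≥0∞) + 1)) ^ (1 / q.toReal)

/-- The weighted thresholding seminorm `|f|_{T_q^α(D,X,Λ)}`: infimum over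
reconstruction coefficients `c` and bijections `π` ordering the weighted
coefficients non-increasingly of the error sum for the approximants
`f^Λ_m = ∑_{k=1}^m c_{π(k)} g_{π(k)}`. -/
def TSemi (g : ℕ → X) (Ω : ℕ) (lam : ℤ → ℝ) (α : ℝ) (q : ℝ≥0∞) (f : X) : ℝ≥0∞ :=
  ⨅ (c : ℕ → ℂ) (π : Equiv.Perm ℕ)
    (_ : Antitone fun k => wSeq Ω lam (fun j => ‖c j‖) (π k)),
    errPow α q fun m => (‖f - ∑ k ∈ Finset.range m, c (π k) • g (π k)‖₊ : ℝ≥0∞)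

/-- `‖f‖_{T_q^α(D,X,Λ)} = |f|_{T_q^α(D,X,Λ)} + ‖f‖_X`. -/
def TNorm (g : ℕ → X) (Ω : ℕ) (lam : ℤ → ℝ) (α : ℝ) (q : ℝ≥0∞) (f : X) : ℝ≥0∞ :=
  TSemi g Ω lam α q f + ‖f‖₊

end

/-! Since `π` orders the weighted sequence non-increasingly, by pigeonhole each `n` has some
`i ≤ n` with `π i ≥ n`, whence
`λ₀ c_{π n} ≤ c^Λ_{π n} ≤ c^Λ_{π i} ≤ (∑_l λ_l) c_{π i - Ω} ≤ (∑_l λ_l) c_{n - Ω}`,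
the outer two inequalities because `c` is non-negative and non-increasing. This pointwise
bound passes to the decreasing rearrangements and hence to every Lorentz quasi-norm, with
`C = ∑_l λ_l / λ₀`. -/

open Function

lemma Nat.exists_le_le_apply_of_injective {f : ℕ → ℕ} (hf : Injective f) (n : ℕ) :
    ∃ i ≤ n, n ≤ f i := by
  by_contra! h
  obtain ⟨x, -, y, -, hne, heq⟩ := exists_ne_map_eq_of_card_lt_of_maps_to
    (s := range (n + 1)) (t := range n) (f := f) (by simp)
    fun i hi => by simpa using h i (Nat.lt_succ_iff.1 (mem_range.1 hi))
  exact hne (hf heq)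

section Rearrangement

lemma dRearr_mono {f g : ℕ → ℝ≥0∞} (h : f ≤ g) : dRearr f ≤ dRearr g := fun _ =>
  sInf_le_sInf fun _ ht => (Set.encard_mono fun k hk => lt_of_lt_of_le hk (h k)).trans ht

lemma dRearr_const_mul_le {t : ℝ≥0∞} (ht : t ≠ ∞) (g : ℕ → ℝ≥0∞) (i : ℕ) :
    dRearr (fun k => t * g k) i ≤ t * dRearr g i := by
  unfold dRearr
  set A := {s : ℝ≥0∞ | ({k : ℕ | s < g k}).encard ≤ (i : ℕ∞)}
  have : Nonempty A := ⟨⟨∞, by simp [A]⟩⟩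
  rw [sInf_eq_iInf' (s := A), ENNReal.mul_iInf (by simp [ht])]
  refine le_iInf fun s => sInf_le ?_
  refine (Set.encard_mono fun k (hk : t * s < t * g k) => ?_).trans s.2
  exact (show s.1 < g k from lt_of_not_ge fun hle => hk.not_ge (mul_le_mul_right hle t))

lemma lorentzNorm_le_mul_of_dRearr_le {τ : ℝ} {q : ℝ≥0∞} (hq : 0 < q) {t : ℝ≥0∞}
    {f g : ℕ → ℝ≥0∞} (h : ∀ i, dRearr f i ≤ t * dRearr g i) :
    lorentzNorm τ q f ≤ t * lorentzNorm τ q g := by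
  have hw : ∀ i : ℕ, ((i : ℝ≥0∞) + 1) ^ (1 / τ) * dRearr f i ≤
      t * (((i : ℝ≥0∞) + 1) ^ (1 / τ) * dRearr g i) := fun i =>
    (mul_le_mul_right (h i) _).trans_eq (mul_left_comm _ _ _)
  unfold lorentzNorm
  split_ifs with hqt
  · rw [ENNReal.mul_iSup]
    exact iSup_mono hw
  · have hqr : 0 < q.toReal := ENNReal.toReal_pos hq.ne' hqt
    calc _ ≤ (∑' i : ℕ, (t * (((i : ℝ≥0∞) + 1) ^ (1 / τ) * dRearr g i)) ^ q.toReal /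
          ((i : ℝ≥0∞) + 1)) ^ (1 / q.toReal) := by
          gcongr (∑' i, ?_ ^ _ / _) ^ _ with i
          exact hw i
      _ = _ := by
          simp_rw [ENNReal.mul_rpow_of_nonneg _ _ hqr.le, mul_div_assoc, ENNReal.tsum_mul_left]
          rw [ENNReal.mul_rpow_of_nonneg _ _ (by positivity), ← ENNReal.rpow_mul,
            mul_one_div_cancel hqr.ne', ENNReal.rpow_one]

lemma lorentzNorm'_le_mul_of_nnnorm_le {E F : Type*} [NNNorm E] [NNNorm F] {τ : ℝ} {q : ℝ≥0∞}
    (hq : 0 < q) {t : ℝ≥0} {f : ℕ → E} {g : ℕ → F} (h : ∀ k, ‖f k‖₊ ≤ t * ‖g k‖₊) :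
    lorentzNorm' τ q f ≤ t * lorentzNorm' τ q g :=
  lorentzNorm_le_mul_of_dRearr_le hq fun i =>
    calc dRearr (fun k => (‖f k‖₊ : ℝ≥0∞)) i
        ≤ dRearr (fun k => (t : ℝ≥0∞) * (‖g k‖₊ : ℝ≥0∞)) i :=
          dRearr_mono (fun k => by rw [← ENNReal.coe_mul]; exact ENNReal.coe_le_coe.2 (h k)) i
      _ ≤ t * dRearr (fun k => (‖g k‖₊ : ℝ≥0∞)) i := dRearr_const_mul_le ENNReal.coe_ne_top _ i

end Rearrangement

section WeightedSequence

variable {Ω : ℕ} {lam : ℤ → ℝ}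

lemma wSeq_eq_sum_Icc (c : ℕ → ℝ) (k : ℕ) :
    wSeq Ω lam c k = ∑ l ∈ Icc (-(Ω : ℤ)) Ω,
      lam l * (if 0 ≤ (k : ℤ) + l then |c ((k : ℤ) + l).toNat| else 0) := by
  rw [wSeq, sub_eq_add_neg, ← map_add_left_Icc, sum_map]
  simp only [addLeftEmbedding, Embedding.coeFn_mk, add_sub_cancel_left]
  rfl

lemma mul_abs_le_wSeq (hlam : ∀ l, 0 ≤ lam l) (c : ℕ → ℝ) (k : ℕ) :
    lam 0 * |c k| ≤ wSeq Ω lam c k := by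
  rw [wSeq_eq_sum_Icc]
  refine (single_le_sum (f := fun l => lam l * _) (fun l _ => ?_)
    (mem_Icc.2 ⟨by omega, by omega⟩ : (0 : ℤ) ∈ Icc (-(Ω : ℤ)) Ω)).trans_eq' (by simp)
  exact mul_nonneg (hlam l) (by split_ifs <;> simp)

lemma wSeq_le_sum_mul (hlam : ∀ l, 0 ≤ lam l) {c : ℕ → ℝ} (hc : ∀ k, 0 ≤ c k)
    (hc_anti : Antitone c) (k : ℕ) :
    wSeq Ω lam c k ≤ (∑ l ∈ Icc (-(Ω : ℤ)) Ω, lam l) * c (k - Ω) := by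
  rw [wSeq_eq_sum_Icc, sum_mul]
  refine sum_le_sum fun l hl => mul_le_mul_of_nonneg_left ?_ (hlam l)
  split_ifs
  · rw [abs_of_nonneg (hc _)]
    exact hc_anti (by rw [mem_Icc] at hl; omega)
  · exact hc _

lemma mul_le_sum_mul_of_antitone_wSeq_comp (hlam : ∀ l, 0 ≤ lam l) {c : ℕ → ℝ}
    (hc : ∀ k, 0 ≤ c k) (hc_anti : Antitone c) {π : Equiv.Perm ℕ}
    (hπ : Antitone fun k => wSeq Ω lam c (π k)) (n : ℕ) :
    lam 0 * c (π n) ≤ (∑ l ∈ Icc (-(Ω : ℤ)) Ω, lam l) * c (n - Ω) := by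
  obtain ⟨i, hin, hni⟩ := Nat.exists_le_le_apply_of_injective π.injective n
  calc lam 0 * c (π n) ≤ wSeq Ω lam c (π n) := by
        simpa only [abs_of_nonneg (hc _)] using mul_abs_le_wSeq hlam c (π n)
    _ ≤ wSeq Ω lam c (π i) := hπ hin
    _ ≤ (∑ l ∈ Icc (-(Ω : ℤ)) Ω, lam l) * c (π i - Ω) := wSeq_le_sum_mul hlam hc hc_anti _
    _ ≤ (∑ l ∈ Icc (-(Ω : ℤ)) Ω, lam l) * c (n - Ω) :=
        mul_le_mul_of_nonneg_left (hc_anti (by omega))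
          (sum_nonneg fun l _ => hlam l)

end WeightedSequence

theorem weighted_tail_estimate_general
    (Ω : ℕ) (lam : ℤ → ℝ) (hlam : IsBandedWeight Ω lam)
    (p : ℝ) (q : ℝ≥0∞) (hq : 0 < q) :
    ∃ C : ℝ≥0∞, 0 < C ∧ C ≠ ∞ ∧
      ∀ c : ℕ → ℝ, (∀ k, 0 ≤ c k) → Antitone c → lorentzNorm' p q c ≠ ∞ →
        ∀ π : Equiv.Perm ℕ, (Antitone fun k => wSeq Ω lam c (π k)) →
          ∀ m : ℕ, Ω ≤ m →
            lorentzNorm' p q (fun k => c (π (k + m))) ≤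
              C * lorentzNorm' p q (fun k => c (k + (m - Ω))) := by
  obtain ⟨hlam_nonneg, hlam_pos, -⟩ := hlam
  set S := ∑ l ∈ Icc (-(Ω : ℤ)) Ω, lam l
  have hS : 1 ≤ S / lam 0 :=
    (one_le_div hlam_pos).2 (single_le_sum (fun l _ => hlam_nonneg l) (by simp))
  refine ⟨(S / lam 0).toNNReal, by simpa using hS.trans_lt' one_pos, ENNReal.coe_ne_top,
    fun c hc hc_anti _ π hπ m hm => lorentzNorm'_le_mul_of_nnnorm_le hq fun k => ?_⟩
  have hbound := mul_le_sum_mul_of_antitone_wSeq_comp hlam_nonneg hc hc_anti hπ (k + m)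
  rw [show k + m - Ω = k + (m - Ω) by omega] at hbound
  rw [← NNReal.coe_le_coe, NNReal.coe_mul, Real.coe_toNNReal _ (zero_le_one.trans hS),
    coe_nnnorm, coe_nnnorm, Real.norm_of_nonneg (hc _), Real.norm_of_nonneg (hc _),
    div_mul_eq_mul_div, le_div_iff₀ hlam_pos]
  linarith

/-- Lemma 1 of the paper. For a banded non-negative Toeplitz
weight `Λ` with bandwidth `Ω` and `p ∈ (0,∞)`, `q ∈ (0,∞]`, there is `C > 0`
such that for every non-increasing non-negative `{c_k} ∈ ℓ_q^p` and every
bijection `π_Λ` making the weighted sequence `{c^Λ_{π_Λ(k)}}` non-increasing,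
the tail estimate
`‖{c_{π_Λ(k)}}_{k=m+1}^∞‖_{ℓ_q^p} ≤ C ‖{c_k}_{k=m+1-Ω}^∞‖_{ℓ_q^p}` holds for
all `m ≥ Ω`. -/
theorem weighted_tail_estimate
    (Ω : ℕ) (lam : ℤ → ℝ) (hlam : IsBandedWeight Ω lam)
    (p : ℝ) (hp : 0 < p) (q : ℝ≥0∞) (hq : 0 < q) :
    ∃ C : ℝ≥0∞, 0 < C ∧ C ≠ ∞ ∧
      ∀ c : ℕ → ℝ, (∀ k, 0 ≤ c k) → Antitone c → lorentzNorm' p q c ≠ ∞ →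
        ∀ π : Equiv.Perm ℕ, (Antitone fun k => wSeq Ω lam c (π k)) →
          ∀ m : ℕ, Ω ≤ m →
            lorentzNorm' p q (fun k => c (π (k + m))) ≤
              C * lorentzNorm' p q (fun k => c (k + (m - Ω))) :=
  weighted_tail_estimate_general Ω lam hlam p q hq
end

section
/- Let X be a Banach space, D = {g_k}_{k∈ℕ} a complete dictionary for X, Λ a banded non-negative Toeplitz matrix with bandwidth Ω ∈ ℕ, and α ∈ (0,∞), q ∈ (0,∞]. Then T_q^α(D,X,Λ) embeds continuously into the approximation space A_q^α(D,X): there is a constant C such that ‖f‖_{A_q^α(D,X)} ≤ C ‖f‖_{T_q^α(D,X,Λ)} for all f ∈ T_q^α(D,X,Λ). -/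
open scoped ENNReal NNReal
open Finset

/-!
Every thresholding approximant `f^Λ_m = ∑_{k<m} c_{π k} g_{π k}` is an `m`-term approximation,
so `σ_m(f) ≤ ‖f - f^Λ_m‖` for every admissible pair `(c, π)`.
Since `m ↦ σ_m(f)` is non-increasing, it dominates its own decreasing rearrangement, so the
Lorentz quasi-norm of `{σ_m(f)}` is bounded term by term by the error sum defining
`|f|_{T_q^α}`. The embedding therefore holds with constant `C = 1`.
-/

lemma dRearr_le_of_antitone {a : ℕ → ℝ≥0∞} (ha : Antitone a) (i : ℕ) :
    dRearr a i ≤ a i := by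
  apply sInf_le
  have hsub : {k : ℕ | a i < a k} ⊆ ↑(Finset.range i) := fun k hk => by
    simpa using lt_of_not_ge fun hik => (ha hik).not_gt hk
  calc ({k : ℕ | a i < a k}).encard ≤ (↑(Finset.range i) : Set ℕ).encard :=
        Set.encard_mono hsub
    _ = (i : ℕ∞) := by rw [Set.encard_coe_eq_coe_finsetCard, Finset.card_range]

lemma lorentzNorm_le_errPow {α : ℝ} (q : ℝ≥0∞) {a e : ℕ → ℝ≥0∞}
    (hae : ∀ i, dRearr a i ≤ e (i + 1)) :
    lorentzNorm (1 / α) q a ≤ errPow α q e := by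
  unfold lorentzNorm errPow
  rw [one_div_one_div]
  split
  · exact iSup_mono fun i => mul_le_mul_right (hae i) _
  · refine ENNReal.rpow_le_rpow (ENNReal.tsum_le_tsum fun i => ?_) (by positivity)
    exact ENNReal.div_le_div_right
      (ENNReal.rpow_le_rpow (mul_le_mul_right (hae i) _) ENNReal.toReal_nonneg) _

section sigmaE

variable {X : Type*} [NormedAddCommGroup X] [NormedSpace ℂ X] (g : ℕ → X) (f : X)

lemma sigmaE_antitone : Antitone fun m => sigmaE g m f :=
  fun _ _ hmn => le_iInf₂ fun s hs => iInf₂_le s (hs.trans hmn)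

lemma sigmaE_le_of_card_le {m : ℕ} {s : Finset ℕ} (hs : s.card ≤ m) (c : ℕ → ℂ) :
    sigmaE g m f ≤ ‖f - ∑ k ∈ s, c k • g k‖₊ :=
  (iInf₂_le s hs).trans (iInf_le _ c)

lemma sigmaE_le_perm (c : ℕ → ℂ) (π : Equiv.Perm ℕ) (m : ℕ) :
    sigmaE g m f ≤ ‖f - ∑ k ∈ Finset.range m, c (π k) • g (π k)‖₊ := by
  have hcard : ((Finset.range m).image π).card ≤ m := by
    rw [Finset.card_image_of_injective _ π.injective, Finset.card_range]
  simpa [Finset.sum_image fun x _ y _ h => π.injective h] using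
    sigmaE_le_of_card_le g f hcard c

lemma lorentzNorm_sigmaE_le_TSemi (Ω : ℕ) (lam : ℤ → ℝ) (α : ℝ) (q : ℝ≥0∞) :
    lorentzNorm (1 / α) q (fun i => sigmaE g (i + 1) f) ≤ TSemi g Ω lam α q f := by
  refine le_iInf fun c => le_iInf fun π => le_iInf fun _ => lorentzNorm_le_errPow q fun i => ?_
  have hσ : Antitone fun i => sigmaE g (i + 1) f :=
    fun _ _ hij => sigmaE_antitone g f (Nat.succ_le_succ hij)
  exact (dRearr_le_of_antitone hσ i).trans (sigmaE_le_perm g f c π (i + 1))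

lemma ANorm_le_TNorm (Ω : ℕ) (lam : ℤ → ℝ) (α : ℝ) (q : ℝ≥0∞) :
    ANorm g α q f ≤ TNorm g Ω lam α q f :=
  add_le_add_left (lorentzNorm_sigmaE_le_TSemi g f Ω lam α q) _

end sigmaE

theorem T_embeds_in_A_general
    {X : Type*} [NormedAddCommGroup X] [NormedSpace ℂ X]
    (g : ℕ → X)
    (Ω : ℕ) (lam : ℤ → ℝ)
    (α : ℝ) (q : ℝ≥0∞) :
    ∃ C : ℝ≥0∞, 0 < C ∧ C ≠ ∞ ∧ ∀ f : X, TNorm g Ω lam α q f ≠ ∞ →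
      ANorm g α q f ≤ C * TNorm g Ω lam α q f :=
  ⟨1, one_pos, ENNReal.one_ne_top, fun f _ => by
    simpa only [one_mul] using ANorm_le_TNorm g f Ω lam α q⟩

/-- the embedding `T_q^α(D,X,Λ) ↪ A_q^α(D,X)`:
`‖f‖_{A_q^α(D,X)} ≤ C ‖f‖_{T_q^α(D,X,Λ)}` for all `f ∈ T_q^α(D,X,Λ)`. -/
theorem T_embeds_in_A
    {X : Type*} [NormedAddCommGroup X] [NormedSpace ℂ X] [CompleteSpace X]
    (g : ℕ → X) (hdict : IsDictionary g)
    (Ω : ℕ) (lam : ℤ → ℝ) (hlam : IsBandedWeight Ω lam)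
    (α : ℝ) (hα : 0 < α) (q : ℝ≥0∞) (hq : 0 < q) :
    ∃ C : ℝ≥0∞, 0 < C ∧ C ≠ ∞ ∧ ∀ f : X, TNorm g Ω lam α q f ≠ ∞ →
      ANorm g α q f ≤ C * TNorm g Ω lam α q f :=
  T_embeds_in_A_general g Ω lam α q
end
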